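/- Let (αₙ) be a sequence of positive reals with αₙ ≥ c·n for some c > 0 and all n ≥ 1, and let z be a complex number with -π/4 < arg(z) < π/4. Then the infinite product ∏ₙ (1 - z²/αₙ²)/(1 + z²/αₙ²) converges and its modulus is strictly less than 1. -/

import Mathlib

/-!
For `Re w ≥ 0` one has `‖1 - w‖² = ‖1 + w‖² - 4 Re w ≤ ‖1 + w‖²`, so the Cayley factor
`(1 - w) / (1 + w)` has modulus at most `1`, strictly less when `Re w > 0`, and it differs from `1`
by at most `2 ‖w‖`. Put `wₙ = z² / αₙ²`: the sector condition gives `Re z² > 0`, hence `Re wₙ ≥ 0`,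
and `αₙ ≥ c n` makes `∑ ‖wₙ‖` converge, so the product converges. Its modulus is the product of the
moduli of the factors, all at most `1` and one of them strictly less.
-/

open Complex Real

namespace Complex

lemma re_sq_eq_norm_sq_mul_cos_two_mul_arg (z : ℂ) :
    (z ^ 2).re = ‖z‖ ^ 2 * Real.cos (2 * z.arg) := by
  rw [Real.cos_two_mul', sq, mul_re, ← norm_mul_cos_arg z, ← norm_mul_sin_arg z]
  ring

lemma re_sq_pos_of_arg_mem_Ioo {z : ℂ} (hz : z ≠ 0) (harg : z.arg ∈ Set.Ioo (-(π / 4)) (π / 4)) :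
    0 < (z ^ 2).re := by
  rw [re_sq_eq_norm_sq_mul_cos_two_mul_arg]
  have hcos : 0 < Real.cos (2 * z.arg) :=
    Real.cos_pos_of_mem_Ioo ⟨by linarith [harg.1], by linarith [harg.2]⟩
  positivity

lemma div_ofReal_sq_re (w : ℂ) (a : ℝ) : (w / (a : ℂ) ^ 2).re = w.re / a ^ 2 := by
  rw [← ofReal_pow, div_ofReal_re]

lemma normSq_one_add_sub_normSq_one_sub (w : ℂ) :
    normSq (1 + w) - normSq (1 - w) = 4 * w.re := by
  simp only [normSq_apply, add_re, add_im, sub_re, sub_im, one_re, one_im]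
  ring

lemma one_add_ne_zero_of_re_nonneg {w : ℂ} (hw : 0 ≤ w.re) : 1 + w ≠ 0 := by
  intro h
  have := congrArg re h
  simp only [add_re, one_re, zero_re] at this
  linarith

lemma norm_one_sub_div_one_add_le_one {w : ℂ} (hw : 0 ≤ w.re) : ‖(1 - w) / (1 + w)‖ ≤ 1 := by
  rw [norm_div, div_le_one (norm_pos_iff.mpr (one_add_ne_zero_of_re_nonneg hw)), norm_def,
    norm_def]
  gcongr
  linarith [normSq_one_add_sub_normSq_one_sub w]

lemma norm_one_sub_div_one_add_lt_one {w : ℂ} (hw : 0 < w.re) : ‖(1 - w) / (1 + w)‖ < 1 := by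
  rw [norm_div, div_lt_one (norm_pos_iff.mpr (one_add_ne_zero_of_re_nonneg hw.le)), norm_def,
    norm_def]
  exact Real.sqrt_lt_sqrt (normSq_nonneg _) (by linarith [normSq_one_add_sub_normSq_one_sub w])

lemma norm_one_sub_div_one_add_sub_one_le {w : ℂ} (hw : 0 ≤ w.re) :
    ‖(1 - w) / (1 + w) - 1‖ ≤ 2 * ‖w‖ := by
  have hne := one_add_ne_zero_of_re_nonneg hw
  have hden : 1 ≤ ‖1 + w‖ := by
    have := re_le_norm (1 + w)
    rw [add_re, one_re] at this
    linarith
  calc ‖(1 - w) / (1 + w) - 1‖ = 2 * ‖w‖ / ‖1 + w‖ := by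
        rw [div_sub_one hne, show 1 - w - (1 + w) = -2 * w by ring, norm_div, norm_mul]
        norm_num
    _ ≤ 2 * ‖w‖ := div_le_self (by positivity) hden

lemma multipliable_one_sub_div_one_add {ι : Type*} {t : ι → ℂ} (hre : ∀ i, 0 ≤ (t i).re)
    (hs : Summable fun i ↦ ‖t i‖) : Multipliable fun i ↦ (1 - t i) / (1 + t i) := by
  have hsub : Summable fun i ↦ (1 - t i) / (1 + t i) - 1 :=
    (hs.mul_left 2).of_norm_bounded fun i ↦ norm_one_sub_div_one_add_sub_one_le (hre i)
  simpa using Complex.multipliable_one_add_of_summable hsub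

end Complex

lemma summable_inv_sq_of_linear_lower_bound {α : ℕ → ℝ} {c : ℝ} (hc : 0 < c)
    (hgrow : ∀ n : ℕ, 1 ≤ n → c * n ≤ α n) : Summable fun n ↦ (α n ^ 2)⁻¹ := by
  refine Summable.of_norm_bounded_eventually_nat
    ((summable_nat_pow_inv.mpr one_lt_two).mul_left (c ^ 2)⁻¹) ?_
  filter_upwards [Filter.eventually_ge_atTop 1] with n hn
  have hcn : 0 < c * n := by positivity
  rw [norm_inv, norm_pow, Real.norm_eq_abs, sq_abs, ← mul_inv, ← mul_pow]
  gcongr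
  exact hgrow n hn

lemma tprod_le_of_nonneg_of_le_one {ι : Type*} {g : ι → ℝ} (hg : Multipliable g)
    (h0 : ∀ i, 0 ≤ g i) (h1 : ∀ i, g i ≤ 1) (j : ι) : ∏' i, g i ≤ g j := by
  refine le_of_tendsto hg.hasProd ?_
  filter_upwards [Filter.eventually_ge_atTop {j}] with s hs
  simpa using Finset.prod_le_prod_of_subset_of_le_one hs (fun i _ ↦ h0 i) (fun i _ _ ↦ h1 i)

lemma Multipliable.norm_tprod_lt_one {ι E : Type*} [SeminormedCommRing E] [NormMulClass E]
    [NormOneClass E] {f : ι → E} (hf : Multipliable f) (h1 : ∀ i, ‖f i‖ ≤ 1) {j : ι}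
    (hj : ‖f j‖ < 1) : ‖∏' i, f i‖ < 1 := by
  rw [hf.norm_tprod]
  exact (tprod_le_of_nonneg_of_le_one hf.norm (fun i ↦ norm_nonneg _) h1 j).trans_lt hj

theorem stmt1_general (α : ℕ → ℝ) (c : ℝ) (hc : 0 < c)
    (hgrow : ∀ n : ℕ, 1 ≤ n → c * n ≤ α n)
    (z : ℂ) (hz : z ≠ 0)
    (harg : -(Real.pi / 4) < z.arg ∧ z.arg < Real.pi / 4) :
    Multipliable (fun n : ℕ =>
        (1 - z ^ 2 / (α n : ℂ) ^ 2) / (1 + z ^ 2 / (α n : ℂ) ^ 2)) ∧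
    ‖(∏' n : ℕ,
        (1 - z ^ 2 / (α n : ℂ) ^ 2) / (1 + z ^ 2 / (α n : ℂ) ^ 2))‖ < 1 := by
  have hz2 : 0 < (z ^ 2).re := re_sq_pos_of_arg_mem_Ioo hz harg
  have hre : ∀ n, 0 ≤ (z ^ 2 / (α n : ℂ) ^ 2).re := fun n ↦ by
    rw [div_ofReal_sq_re]; positivity
  have hnorm : Summable fun n ↦ ‖z ^ 2 / (α n : ℂ) ^ 2‖ := by
    simpa [div_eq_mul_inv] using (summable_inv_sq_of_linear_lower_bound hc hgrow).mul_left (‖z‖ ^ 2)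
  have hmult := multipliable_one_sub_div_one_add hre hnorm
  refine ⟨hmult, hmult.norm_tprod_lt_one (fun n ↦ norm_one_sub_div_one_add_le_one (hre n))
    (j := 1) (norm_one_sub_div_one_add_lt_one ?_)⟩
  -- `α 0` is unconstrained and may vanish, so the strict factor is taken at `n = 1`.
  have hα1 : 0 < α 1 := by simpa using hc.trans_le (by simpa using hgrow 1 le_rfl)
  rw [div_ofReal_sq_re]
  positivity

theorem stmt1 (α : ℕ → ℝ) (c : ℝ) (hc : 0 < c)
    (hαpos : ∀ n, 0 < α n)
    (hgrow : ∀ n : ℕ, 1 ≤ n → c * n ≤ α n)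
    (z : ℂ) (hz : z ≠ 0)
    (harg : -(Real.pi / 4) < z.arg ∧ z.arg < Real.pi / 4) :
    Multipliable (fun n : ℕ =>
        (1 - z ^ 2 / (α n : ℂ) ^ 2) / (1 + z ^ 2 / (α n : ℂ) ^ 2)) ∧
    ‖(∏' n : ℕ,
        (1 - z ^ 2 / (α n : ℂ) ^ 2) / (1 + z ^ 2 / (α n : ℂ) ^ 2))‖ < 1 :=
  stmt1_general α c hc hgrow z hz harg
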